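/- arXiv:1609.00666 — 7 statements merged into one kernel-verified Lean document; each statement's English description precedes it below -/
import Mathlib

section
/- For any n ∈ ℕ with n ≥ 1, and d(m) := σ² + ∫_{ℝ\{0}} e^{(m-1)u}(e^u−1)² dM(u), one has ∑_{1 ≤ k < p ≤ n} d(p−k) = φ(−in), where φ(−in) := (σ²/2)(n²−n) + ∫_{ℝ\{0}} (e^{nu} − 1 − n(e^u−1)) dM(u). -/
/-!
The constant σ² contributes `σ² · #{1 ≤ k < p ≤ n} = σ² (n² − n) / 2`. For the integral part,
exchange the finite sums with the integral; pointwise, with `x = eᵘ`, two geometric sums give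
`∑_{p ≤ n} ∑_{k < p} x^{p−k−1} (x − 1)² = ∑_{p ≤ n} (x^{p−1} − 1)(x − 1) = xⁿ − 1 − n (x − 1)`.
-/

open MeasureTheory Real Finset

theorem sum_Ico_pow_sub_mul_sub_one {R : Type*} [CommRing R] (x : R) (p : ℕ) :
    (∑ k ∈ Ico 1 p, x ^ (p - k - 1)) * (x - 1) = x ^ (p - 1) - 1 := by
  have hreflect : ∑ k ∈ Ico 1 p, x ^ (p - k - 1) = ∑ i ∈ range (p - 1), x ^ (p - 1 - 1 - i) := by
    rw [sum_Ico_eq_sum_range]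
    exact sum_congr rfl fun i _ => by congr 1; omega
  rw [hreflect, sum_range_reflect (x ^ ·) (p - 1), geom_sum_mul]

theorem sum_Icc_sum_Ico_pow_mul_sub_one_sq {R : Type*} [CommRing R] (x : R) (n : ℕ) :
    ∑ p ∈ Icc 1 n, ∑ k ∈ Ico 1 p, x ^ (p - k - 1) * (x - 1) ^ 2 =
      x ^ n - 1 - n * (x - 1) := by
  induction n with
  | zero => simp
  | succ n ih =>
    rw [sum_Icc_succ_top (by omega), ih, ← sum_mul, sq, ← mul_assoc,
      sum_Ico_pow_sub_mul_sub_one, Nat.add_sub_cancel]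
    push_cast
    ring

theorem sum_Icc_sum_Ico_const (c : ℝ) (n : ℕ) :
    ∑ p ∈ Icc 1 n, ∑ _k ∈ Ico 1 p, c = c / 2 * ((n : ℝ) ^ 2 - n) := by
  induction n with
  | zero => simp
  | succ n ih =>
    rw [sum_Icc_succ_top (by omega), ih]
    simp only [sum_const, Nat.card_Ico, nsmul_eq_mul, Nat.add_sub_cancel]
    push_cast
    ring

theorem exp_natCast_sub_one_mul {m : ℕ} (hm : 1 ≤ m) (u : ℝ) :
    exp (((m : ℝ) - 1) * u) = exp u ^ (m - 1) := by
  rw [← exp_nat_mul, Nat.cast_sub hm, Nat.cast_one]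

theorem sum_Icc_sum_Ico_exp_mul_exp_sub_one_sq (u : ℝ) (n : ℕ) :
    ∑ p ∈ Icc 1 n, ∑ k ∈ Ico 1 p, exp ((((p - k : ℕ) : ℝ) - 1) * u) * (exp u - 1) ^ 2 =
      exp (n * u) - 1 - n * (exp u - 1) := by
  rw [exp_nat_mul, ← sum_Icc_sum_Ico_pow_mul_sub_one_sq]
  refine sum_congr rfl fun p _ => sum_congr rfl fun k hk => ?_
  rw [exp_natCast_sub_one_mul (by simp at hk; omega)]

theorem stmt0_general (σ2 : ℝ) (M : Measure ℝ) (n : ℕ)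
    (hd : ∀ m : ℕ, Integrable
      (fun u : ℝ => Real.exp (((m : ℝ) - 1) * u) * (Real.exp u - 1) ^ 2)
      (M.restrict {(0 : ℝ)}ᶜ))
    (d : ℕ → ℝ)
    (hd_def : ∀ m : ℕ, d m = σ2 +
      ∫ u in {(0 : ℝ)}ᶜ, Real.exp (((m : ℝ) - 1) * u) * (Real.exp u - 1) ^ 2 ∂M) :
    ∑ p ∈ Finset.Icc 1 n, ∑ k ∈ Finset.Ico 1 p, d (p - k) =
      σ2 / 2 * ((n : ℝ) ^ 2 - n) +
        ∫ u in {(0 : ℝ)}ᶜ,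
          (Real.exp ((n : ℝ) * u) - 1 - (n : ℝ) * (Real.exp u - 1)) ∂M := by
  simp only [hd_def, sum_add_distrib, sum_Icc_sum_Ico_const]
  congr 1
  simp_rw [← integral_finsetSum _ fun k _ => hd _]
  rw [← integral_finsetSum _ fun p _ => integrable_finsetSum _ fun k _ => hd _]
  simp_rw [sum_Icc_sum_Ico_exp_mul_exp_sub_one_sq]

/-- For `n ≥ 1`, `∑_{1 ≤ k < p ≤ n} d(p−k) = φ(−in)`, where
`d(m) = σ² + ∫ e^{(m−1)u}(e^u−1)² dM(u)` and
`φ(−in) = (σ²/2)(n²−n) + ∫ (e^{nu} − 1 − n(e^u−1)) dM(u)`. -/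
theorem stmt0 (σ2 : ℝ) (hσ : 0 ≤ σ2) (M : Measure ℝ) (n : ℕ) (hn : 1 ≤ n)
    (hd : ∀ m : ℕ, Integrable
      (fun u : ℝ => Real.exp (((m : ℝ) - 1) * u) * (Real.exp u - 1) ^ 2)
      (M.restrict {(0 : ℝ)}ᶜ))
    (hφ : Integrable
      (fun u : ℝ => Real.exp ((n : ℝ) * u) - 1 - (n : ℝ) * (Real.exp u - 1))
      (M.restrict {(0 : ℝ)}ᶜ))
    (d : ℕ → ℝ)
    (hd_def : ∀ m : ℕ, d m = σ2 +
      ∫ u in {(0 : ℝ)}ᶜ, Real.exp (((m : ℝ) - 1) * u) * (Real.exp u - 1) ^ 2 ∂M) :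
    ∑ p ∈ Finset.Icc 1 n, ∑ k ∈ Finset.Ico 1 p, d (p - k) =
      σ2 / 2 * ((n : ℝ) ^ 2 - n) +
        ∫ u in {(0 : ℝ)}ᶜ,
          (Real.exp ((n : ℝ) * u) - 1 - (n : ℝ) * (Real.exp u - 1)) ∂M :=
  stmt0_general σ2 M n hd d hd_def
end

section
/- For n variables t₁,…,tₙ distinct reals, any index s, any λ ∈ ℝ, and any function d : ℕ → ℝ: ∑_{l ≠ s} ∂/∂t_l [ (t_l − t_s) ∏_{i<j} |t_i − t_j|^{2λ d(j−i)} ] = (n − 1 + 2λ ∑_{i<j} d(j−i)) ∏_{i<j} |t_i − t_j|^{2λ d(j−i)}. -/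
open Finset

lemma aux_abs_rpow {y : ℝ} (hy : y ≠ 0) (c : ℝ) :
    HasDerivAt (fun x : ℝ => |x| ^ c) (c / y * |y| ^ c) y := by
  have h : HasDerivAt (fun x : ℝ => |x| ^ c) (c * |y| ^ (c - 1) * (SignType.sign y : ℝ)) y :=
    (Real.hasDerivAt_rpow_const (p := c)
      (Or.inl (abs_ne_zero.mpr hy))).comp y (hasDerivAt_abs hy)
  convert h using 1
  have habs : |y| ^ (c - 1) = |y| ^ c / |y| := by
    rw [Real.rpow_sub (abs_pos.mpr hy), Real.rpow_one]
  rcases hy.lt_or_gt with h0 | h0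
  · rw [habs, abs_of_neg h0]
    simp only [sign_neg h0]
    push_cast
    field_simp
    rw [SignType.coe_one, mul_one]
  · rw [habs, abs_of_pos h0]
    simp only [sign_pos h0]
    field_simp
    rw [SignType.coe_one, mul_one]

lemma aux_sub_right {a b : ℝ} (h : b ≠ a) (c : ℝ) :
    HasDerivAt (fun x : ℝ => |x - a| ^ c) (c / (b - a) * |b - a| ^ c) b := by
  have h0 := (aux_abs_rpow (sub_ne_zero.mpr h) c).comp b ((hasDerivAt_id b).sub_const a)
  have : HasDerivAt (fun x : ℝ => |x - a| ^ c) (c / (b - a) * |b - a| ^ c * 1) b := h0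
  rw [mul_one] at this
  exact this

lemma aux_sub_left {a b : ℝ} (h : a ≠ b) (c : ℝ) :
    HasDerivAt (fun x : ℝ => |a - x| ^ c) (c / (b - a) * |a - b| ^ c) b := by
  have h2 : HasDerivAt (fun x : ℝ => |a - x| ^ c) (c / (a - b) * |a - b| ^ c * (0 - 1)) b :=
    (aux_abs_rpow (sub_ne_zero.mpr h) c).comp b
    ((hasDerivAt_const b a).sub (hasDerivAt_id b))
  convert h2 using 1
  have hab : a - b ≠ 0 := sub_ne_zero.mpr h
  have hba : b - a ≠ 0 := sub_ne_zero.mpr (Ne.symm h)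
  rw [show b - a = -(a - b) by ring, div_neg]
  ring

/-- The finset of ordered pairs `i < j`. -/
def TT (n : ℕ) : Finset (Fin n × Fin n) :=
  (univ ×ˢ univ).filter fun p => p.1 < p.2

lemma prodT {n : ℕ} (f : Fin n → Fin n → ℝ) :
    ∏ i : Fin n, ∏ j ∈ univ.filter (fun j => i < j), f i j = ∏ p ∈ TT n, f p.1 p.2 := by
  rw [TT, Finset.prod_filter (s := univ ×ˢ univ), Finset.prod_product]
  exact Finset.prod_congr rfl fun i _ => Finset.prod_filter _ _

lemma sumT {n : ℕ} (f : Fin n → Fin n → ℝ) :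
    ∑ i : Fin n, ∑ j ∈ univ.filter (fun j => i < j), f i j = ∑ p ∈ TT n, f p.1 p.2 := by
  rw [TT, Finset.sum_filter (s := univ ×ˢ univ), Finset.sum_product]
  exact Finset.sum_congr rfl fun i _ => Finset.sum_filter _ _

/-- The exponents `2·λ·d(j−i)` indexed by the pair `p = (i,j)`. -/
def cexp (lam : ℝ) (d : ℕ → ℝ) {n : ℕ} (p : Fin n × Fin n) : ℝ :=
  2 * lam * d ((p.2 : ℕ) - (p.1 : ℕ))

/-- The full product `∏_{i<j} |tᵢ − tⱼ|^{2λ d(j−i)}`. -/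
noncomputable def Pprod {n : ℕ} (t : Fin n → ℝ) (lam : ℝ) (d : ℕ → ℝ) : ℝ :=
  ∏ p ∈ TT n, |t p.1 - t p.2| ^ cexp lam d p

/-- Logarithmic-derivative coefficient of the factor `p` w.r.t. variable `l`. -/
noncomputable def coeff {n : ℕ} (t : Fin n → ℝ) (c : Fin n × Fin n → ℝ)
    (l : Fin n) (p : Fin n × Fin n) : ℝ :=
  if p.1 = l then c p / (t l - t p.2) else if p.2 = l then c p / (t l - t p.1) else 0

lemma factor_hasDerivAt {n : ℕ} {t : Fin n → ℝ} (hdist : Function.Injective t)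
    (c : Fin n × Fin n → ℝ) (l : Fin n) {p : Fin n × Fin n} (hp : p ∈ TT n) :
    HasDerivAt (fun x : ℝ =>
        |Function.update t l x p.1 - Function.update t l x p.2| ^ c p)
      (coeff t c l p * |t p.1 - t p.2| ^ c p) (t l) := by
  have hlt : p.1 < p.2 := (Finset.mem_filter.mp hp).2
  by_cases h1 : p.1 = l
  · have h2 : p.2 ≠ l := by rintro rfl; exact absurd h1 hlt.ne
    have hfun : (fun x : ℝ =>
        |Function.update t l x p.1 - Function.update t l x p.2| ^ c p)
        = fun x : ℝ => |x - t p.2| ^ c p := by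
      funext x; rw [h1, Function.update_self, Function.update_of_ne h2]
    have hne : t l ≠ t p.2 := fun h => h2 (hdist h).symm
    rw [hfun, coeff, if_pos h1, h1]
    exact aux_sub_right hne (c p)
  · by_cases h2 : p.2 = l
    · have hfun : (fun x : ℝ =>
          |Function.update t l x p.1 - Function.update t l x p.2| ^ c p)
          = fun x : ℝ => |t p.1 - x| ^ c p := by
        funext x; rw [h2, Function.update_self, Function.update_of_ne h1]
      have hne : t p.1 ≠ t l := fun h => h1 (hdist h)
      rw [hfun, coeff, if_neg h1, if_pos h2, h2]
      exact aux_sub_left hne (c p)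
    · have hfun : (fun x : ℝ =>
          |Function.update t l x p.1 - Function.update t l x p.2| ^ c p)
          = fun _ : ℝ => |t p.1 - t p.2| ^ c p := by
        funext x; rw [Function.update_of_ne h1, Function.update_of_ne h2]
      rw [hfun, coeff, if_neg h1, if_neg h2, zero_mul]
      exact hasDerivAt_const _ _

lemma derivEqAux {n : ℕ} {t : Fin n → ℝ} (hdist : Function.Injective t)
    (s l : Fin n) (lam : ℝ) (d : ℕ → ℝ) :
    deriv (fun x : ℝ =>
        (x - t s) *
          ∏ i : Fin n, ∏ j ∈ univ.filter (fun j => i < j),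
            |Function.update t l x i - Function.update t l x j| ^
              (2 * lam * d ((j : ℕ) - (i : ℕ)))) (t l)
    = Pprod t lam d
      + (t l - t s) * ∑ p ∈ TT n, coeff t (cexp lam d) l p * Pprod t lam d := by
  have hfun : (fun x : ℝ =>
        (x - t s) *
          ∏ i : Fin n, ∏ j ∈ univ.filter (fun j => i < j),
            |Function.update t l x i - Function.update t l x j| ^
              (2 * lam * d ((j : ℕ) - (i : ℕ))))
      = fun x : ℝ => (x - t s) * ∏ p ∈ TT n,
          |Function.update t l x p.1 - Function.update t l x p.2| ^ cexp lam d p := by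
    funext x
    rw [prodT (fun i j => |Function.update t l x i - Function.update t l x j| ^
      (2 * lam * d ((j : ℕ) - (i : ℕ))))]
    rfl
  rw [hfun]
  have hprod : HasDerivAt (fun x : ℝ => ∏ p ∈ TT n,
      |Function.update t l x p.1 - Function.update t l x p.2| ^ cexp lam d p)
      (∑ p ∈ TT n, (∏ q ∈ (TT n).erase p,
          |Function.update t l (t l) q.1 - Function.update t l (t l) q.2| ^ cexp lam d q)
        • (coeff t (cexp lam d) l p * |t p.1 - t p.2| ^ cexp lam d p)) (t l) :=
    HasDerivAt.fun_finsetProd fun p hp => factor_hasDerivAt hdist (cexp lam d) l hp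
  have h1 : HasDerivAt (fun x : ℝ => x - t s) 1 (t l) :=
    (hasDerivAt_id (t l)).sub_const (t s)
  have h2 := h1.fun_mul hprod
  simp only [Function.update_eq_self, smul_eq_mul, one_mul] at h2
  rw [h2.deriv]
  unfold Pprod
  congr 1
  congr 1
  refine Finset.sum_congr rfl fun p hp => ?_
  rw [← Finset.prod_erase_mul (TT n) _ hp]
  ring

/-- Differential identity (Eq. (id1)): for pairwise distinct `t₁,…,tₙ`,
`∑_{l ≠ s} ∂/∂t_l [ (t_l − t_s) ∏_{i<j} |t_i − t_j|^{2λ d(j−i)} ]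
  = (n − 1 + 2λ ∑_{i<j} d(j−i)) ∏_{i<j} |t_i − t_j|^{2λ d(j−i)}`. -/
theorem stmt2 (n : ℕ) (hn : 2 ≤ n) (t : Fin n → ℝ)
    (hdist : Function.Injective t) (s : Fin n) (lam : ℝ) (d : ℕ → ℝ) :
    ∑ l ∈ univ.filter (fun l => l ≠ s),
      deriv (fun x : ℝ =>
        (x - t s) *
          ∏ i : Fin n, ∏ j ∈ univ.filter (fun j => i < j),
            |Function.update t l x i - Function.update t l x j| ^
              (2 * lam * d ((j : ℕ) - (i : ℕ)))) (t l)
    = ((n : ℝ) - 1 +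
        2 * lam * ∑ i : Fin n, ∑ j ∈ univ.filter (fun j => i < j),
          d ((j : ℕ) - (i : ℕ))) *
      ∏ i : Fin n, ∏ j ∈ univ.filter (fun j => i < j),
        |t i - t j| ^ (2 * lam * d ((j : ℕ) - (i : ℕ))) := by
  classical
  have hP : (∏ i : Fin n, ∏ j ∈ univ.filter (fun j => i < j),
      |t i - t j| ^ (2 * lam * d ((j : ℕ) - (i : ℕ)))) = Pprod t lam d := by
    rw [prodT (fun i j => |t i - t j| ^ (2 * lam * d ((j : ℕ) - (i : ℕ))))]
    rfl
  have hS : 2 * lam * ∑ i : Fin n, ∑ j ∈ univ.filter (fun j => i < j),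
      d ((j : ℕ) - (i : ℕ)) = ∑ p ∈ TT n, cexp lam d p := by
    rw [sumT (fun i j => d ((j : ℕ) - (i : ℕ))), Finset.mul_sum]
    rfl
  rw [Finset.sum_congr rfl (fun l _ => derivEqAux hdist s l lam d), hP, hS,
    Finset.sum_add_distrib, Finset.sum_const, Finset.filter_ne',
    Finset.card_erase_of_mem (Finset.mem_univ s), Finset.card_univ, Fintype.card_fin]
  have h2 : ∑ l ∈ univ.erase s,
      (t l - t s) * ∑ p ∈ TT n, coeff t (cexp lam d) l p * Pprod t lam d
      = (∑ p ∈ TT n, cexp lam d p) * Pprod t lam d := by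
    rw [Finset.sum_erase _ (by rw [sub_self, zero_mul])]
    simp only [Finset.mul_sum]
    rw [Finset.sum_comm]
    have hper : ∀ p ∈ TT n, ∑ l : Fin n,
        (t l - t s) * (coeff t (cexp lam d) l p * Pprod t lam d)
        = cexp lam d p * Pprod t lam d := ?_
    · rw [Finset.sum_congr rfl hper, ← Finset.sum_mul]
    intro p hp
    have hlt : p.1 < p.2 := (Finset.mem_filter.mp hp).2
    have hne : p.1 ≠ p.2 := ne_of_lt hlt
    have hvan : ∀ l ∈ (univ : Finset (Fin n)), l ∉ ({p.1, p.2} : Finset (Fin n)) →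
        (t l - t s) * (coeff t (cexp lam d) l p * Pprod t lam d) = 0 := by
      intro l _ hl
      simp only [Finset.mem_insert, Finset.mem_singleton, not_or] at hl
      simp [coeff, Ne.symm hl.1, Ne.symm hl.2]
    rw [← Finset.sum_subset (Finset.subset_univ ({p.1, p.2} : Finset (Fin n))) hvan,
      Finset.sum_pair hne]
    have h12 : t p.1 - t p.2 ≠ 0 := sub_ne_zero.mpr fun h => hne (hdist h)
    have h21 : t p.2 - t p.1 ≠ 0 := sub_ne_zero.mpr fun h => hne (hdist h).symm
    simp only [coeff, if_pos rfl, if_neg hne, eq_self_iff_true, if_true]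
    field_simp
    ring
  rw [h2, nsmul_eq_mul, Nat.cast_sub (by omega : 1 ≤ n), Nat.cast_one]
  ring
end

section
/- For n distinct reals t₁,…,tₙ, indices p ≠ s, λ ∈ ℝ, and d : ℕ → ℝ: ∑_{l ≠ s} ∂/∂t_l [ (t_l − t_s)(t_p − t_s) ∏_{i<j} |t_i − t_j|^{2λ d(j−i)} ] = (n + 2λ ∑_{i<j} d(j−i)) (t_p − t_s) ∏_{i<j} |t_i − t_j|^{2λ d(j−i)}. -/
/-!
Write `P(t) = ∏_{i<j} |t_i - t_j|^{c_ij}`. Its logarithmic derivative in a direction `v` is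
`∑_{i<j} c_ij (v_i - v_j) / (t_i - t_j)`; in the direction `t - t_s` every summand is `c_ij`,
which is Euler's identity for the translation-invariant, `(∑ c_ij)`-homogeneous function `P`.
So `∑_{l ≠ s} (t_l - t_s) ∂_l P = (∑ c_ij) P`, while the product rule on the prefactor
`(t_l - t_s)(t_p - t_s)` contributes `(n - 1)(t_p - t_s) P` from `∂_l (t_l - t_s)` and
`(t_p - t_s) P` from `∂_l (t_p - t_s)`.
-/

open Finset

theorem HasDerivAt.abs_rpow_const {f : ℝ → ℝ} {f' x : ℝ} (c : ℝ) (hf : HasDerivAt f f' x)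
    (hx : f x ≠ 0) : HasDerivAt (fun y => |f y| ^ c) (|f x| ^ c * (c * f' / f x)) x := by
  refine (((hasDerivAt_abs hx).comp x hf).rpow_const (p := c)
    (Or.inl (abs_ne_zero.mpr hx))).congr_deriv ?_
  rw [Function.comp_apply, Real.rpow_sub_one (abs_ne_zero.mpr hx)]
  rcases hx.lt_or_gt with hneg | hpos
  · rw [abs_of_neg hneg, sign_neg hneg, SignType.coe_neg_one]
    field_simp
  · rw [abs_of_pos hpos, sign_pos hpos, SignType.coe_one]
    field_simp

theorem HasDerivAt.finsetProd_of_mul {𝕜 ι : Type*} [NontriviallyNormedField 𝕜]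
    {u : Finset ι} {f : ι → 𝕜 → 𝕜} {r : ι → 𝕜} {x : 𝕜}
    (hf : ∀ i ∈ u, HasDerivAt (f i) (f i x * r i) x) :
    HasDerivAt (fun y => ∏ i ∈ u, f i y) ((∏ i ∈ u, f i x) * ∑ i ∈ u, r i) x := by
  classical
  refine (HasDerivAt.fun_finsetProd hf).congr_deriv ?_
  rw [mul_sum]
  refine sum_congr rfl fun i hi => ?_
  rw [smul_eq_mul, ← mul_assoc, prod_erase_mul u _ hi]

theorem sum_mul_single_sub_single {R ι : Type*} [CommRing R] [Fintype ι] [DecidableEq ι]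
    (w : ι → R) (i j : ι) :
    ∑ l, w l * ((Pi.single l 1 : ι → R) i - (Pi.single l 1 : ι → R) j) = w i - w j := by
  simp [mul_sub, sum_sub_distrib, Pi.single_apply]

section PairProd

variable {ι : Type*} [Fintype ι] [LinearOrder ι]

noncomputable def pairProd (c : ι → ι → ℝ) (t : ι → ℝ) : ℝ :=
  ∏ i, ∏ j ∈ univ.filter (fun j => i < j), |t i - t j| ^ c i j

def pairLogDeriv {K : Type*} [Field K] (c : ι → ι → K) (t v : ι → K) : K :=
  ∑ i, ∑ j ∈ univ.filter (fun j => i < j), c i j * (v i - v j) / (t i - t j)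

theorem sum_mul_pairLogDeriv_single {K : Type*} [Field K] (c : ι → ι → K) (t w : ι → K) :
    ∑ l, w l * pairLogDeriv c t (Pi.single l 1) = pairLogDeriv c t w := by
  simp_rw [pairLogDeriv, mul_sum]
  rw [sum_comm]
  refine sum_congr rfl fun i _ => ?_
  rw [sum_comm]
  refine sum_congr rfl fun j _ => ?_
  rw [← sum_mul_single_sub_single w i j, mul_sum, sum_div]
  exact sum_congr rfl fun l _ => by ring

theorem pairLogDeriv_sub_const_self {K : Type*} [Field K] (c : ι → ι → K) {t : ι → K}
    (ht : Function.Injective t) (a : K) :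
    pairLogDeriv c t (fun i => t i - a) = ∑ i, ∑ j ∈ univ.filter (fun j => i < j), c i j := by
  refine sum_congr rfl fun i _ => sum_congr rfl fun j hj => ?_
  have hij : t i - t j ≠ 0 := sub_ne_zero.mpr (ht.ne (mem_filter.mp hj).2.ne)
  rw [sub_sub_sub_cancel_right, mul_div_assoc, div_self hij, mul_one]

theorem HasDerivAt.pairProd {u : ℝ → ι → ℝ} {u' : ι → ℝ} {x : ℝ} (c : ι → ι → ℝ)
    (hu : HasDerivAt u u' x) (hinj : Function.Injective (u x)) :
    HasDerivAt (fun y => pairProd c (u y)) (pairProd c (u x) * pairLogDeriv c (u x) u') x := by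
  have hcoord := hasDerivAt_pi.mp hu
  refine .finsetProd_of_mul fun i _ => .finsetProd_of_mul fun j hj => ?_
  exact ((hcoord i).sub (hcoord j)).abs_rpow_const _
    (sub_ne_zero.mpr (hinj.ne (mem_filter.mp hj).2.ne))

theorem hasDerivAt_sub_mul_sub_mul_pairProd_update {t : ι → ℝ} (ht : Function.Injective t)
    (c : ι → ι → ℝ) (l p s : ι) :
    HasDerivAt
      (fun x => (x - t s) * (Function.update t l x p - Function.update t l x s) *
        pairProd c (Function.update t l x))
      (((t p - t s) + (t l - t s) * ((Pi.single l 1 : ι → ℝ) p - (Pi.single l 1 : ι → ℝ) s)) *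
          pairProd c t +
        (t l - t s) * (t p - t s) * (pairProd c t * pairLogDeriv c t (Pi.single l 1)))
      (t l) := by
  have hu := hasDerivAt_update t l (t l)
  have hcoord := hasDerivAt_pi.mp hu
  have h := (((hasDerivAt_id (t l)).sub_const (t s)).mul ((hcoord p).sub (hcoord s))).mul
    (hu.pairProd c (by rwa [Function.update_eq_self]))
  refine h.congr_deriv ?_
  simp only [Pi.mul_apply, Pi.sub_apply, Function.update_eq_self, one_mul, id_eq]

theorem sum_erase_sub_mul_pairProd_deriv {t : ι → ℝ} (ht : Function.Injective t)
    (c : ι → ι → ℝ) (p s : ι) :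
    ∑ l ∈ univ.erase s,
      (((t p - t s) + (t l - t s) * ((Pi.single l 1 : ι → ℝ) p - (Pi.single l 1 : ι → ℝ) s)) *
          pairProd c t +
        (t l - t s) * (t p - t s) * (pairProd c t * pairLogDeriv c t (Pi.single l 1)))
      = ((Fintype.card ι : ℝ) + ∑ i, ∑ j ∈ univ.filter (fun j => i < j), c i j) * (t p - t s) *
          pairProd c t := by
  set V := pairProd c t
  have hsplit : ∀ l,
      ((t p - t s) + (t l - t s) * ((Pi.single l 1 : ι → ℝ) p - (Pi.single l 1 : ι → ℝ) s)) * V +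
          (t l - t s) * (t p - t s) * (V * pairLogDeriv c t (Pi.single l 1))
        = (t p - t s) * V +
          V * ((t l - t s) * ((Pi.single l 1 : ι → ℝ) p - (Pi.single l 1 : ι → ℝ) s)) +
          (t p - t s) * V * ((t l - t s) * pairLogDeriv c t (Pi.single l 1)) :=
    fun l => by ring
  rw [sum_erase_eq_sub (mem_univ s), sum_congr rfl fun l _ => hsplit l, sum_add_distrib,
    sum_add_distrib, sum_const, card_univ, nsmul_eq_mul, ← mul_sum, ← mul_sum,
    sum_mul_single_sub_single, sum_mul_pairLogDeriv_single, pairLogDeriv_sub_const_self c ht,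
    sub_self, zero_mul]
  ring

end PairProd

theorem stmt3_general (n : ℕ) (t : Fin n → ℝ)
    (hdist : Function.Injective t) (p s : Fin n)
    (lam : ℝ) (d : ℕ → ℝ) :
    ∑ l ∈ univ.filter (fun l => l ≠ s),
      deriv (fun x : ℝ =>
        (x - t s) * (Function.update t l x p - Function.update t l x s) *
          ∏ i : Fin n, ∏ j ∈ univ.filter (fun j => i < j),
            |Function.update t l x i - Function.update t l x j| ^
              (2 * lam * d ((j : ℕ) - (i : ℕ)))) (t l)
    = ((n : ℝ) +
        2 * lam * ∑ i : Fin n, ∑ j ∈ univ.filter (fun j => i < j),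
          d ((j : ℕ) - (i : ℕ))) *
      (t p - t s) *
      ∏ i : Fin n, ∏ j ∈ univ.filter (fun j => i < j),
        |t i - t j| ^ (2 * lam * d ((j : ℕ) - (i : ℕ))) := by
  have h := sum_erase_sub_mul_pairProd_deriv hdist (fun i j => 2 * lam * d (j - i)) p s
  rw [Fintype.card_fin] at h
  simp_rw [filter_ne', mul_sum]
  exact (sum_congr rfl fun l _ =>
    (hasDerivAt_sub_mul_sub_mul_pairProd_update hdist _ l p s).deriv).trans h

/-- Differential identity (Eq. (id2)): for pairwise distinct `t₁,…,tₙ` and `p ≠ s`,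
`∑_{l ≠ s} ∂/∂t_l [ (t_l − t_s)(t_p − t_s) ∏_{i<j} |t_i − t_j|^{2λ d(j−i)} ]
  = (n + 2λ ∑_{i<j} d(j−i)) (t_p − t_s) ∏_{i<j} |t_i − t_j|^{2λ d(j−i)}`. -/
theorem stmt3 (n : ℕ) (hn : 2 ≤ n) (t : Fin n → ℝ)
    (hdist : Function.Injective t) (p s : Fin n) (hps : p ≠ s)
    (lam : ℝ) (d : ℕ → ℝ) :
    ∑ l ∈ univ.filter (fun l => l ≠ s),
      deriv (fun x : ℝ =>
        (x - t s) * (Function.update t l x p - Function.update t l x s) *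
          ∏ i : Fin n, ∏ j ∈ univ.filter (fun j => i < j),
            |Function.update t l x i - Function.update t l x j| ^
              (2 * lam * d ((j : ℕ) - (i : ℕ)))) (t l)
    = ((n : ℝ) +
        2 * lam * ∑ i : Fin n, ∑ j ∈ univ.filter (fun j => i < j),
          d ((j : ℕ) - (i : ℕ))) *
      (t p - t s) *
      ∏ i : Fin n, ∏ j ∈ univ.filter (fun j => i < j),
        |t i - t j| ^ (2 * lam * d ((j : ℕ) - (i : ℕ))) :=
  stmt3_general n t hdist p s lam d
end

section
/- For any n ≥ 2, any function d : ℕ → ℝ (with d symmetric extension d(|j−l|)), pairwise distinct reals t₁,…,tₙ, and any fixed index s: ∑_{l ≠ s} ∑_{j ≠ l} d(|j−l|) (t_l − t_s)/(t_l − t_j) = ∑_{l < j} d(j−l). -/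
/-!
For `l ≠ j` the two weights `(t_l - t_s)/(t_l - t_j)` and `(t_j - t_s)/(t_j - t_l)` add up to `1`.
The terms with `l = s` vanish, so the left side is a sum over all ordered pairs `l ≠ j`; pairing
`(l, j)` with `(j, l)` and using the symmetry of `d(|j - l|)` leaves `∑_{l<j} d(j - l)`.
-/

open Finset

theorem Finset.sum_sum_ne_eq_sum_sum_lt_add_swap {ι M : Type*} [Fintype ι] [LinearOrder ι]
    [AddCommMonoid M] (g : ι → ι → M) :
    ∑ l, ∑ j ∈ univ.filter (fun j => j ≠ l), g l j
      = ∑ l, ∑ j ∈ univ.filter (fun j => l < j), (g l j + g j l) := by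
  have hsplit : ∀ l : ι, univ.filter (fun j => j ≠ l)
      = univ.filter (fun j => l < j) ∪ univ.filter (fun j => j < l) := by
    intro l
    ext j
    simp only [mem_filter, mem_univ, true_and, mem_union]
    exact ne_iff_lt_or_gt.trans or_comm
  have hdisj : ∀ l : ι, Disjoint (univ.filter (fun j => l < j)) (univ.filter (fun j => j < l)) :=
    fun l => disjoint_filter.mpr fun _ _ h => h.asymm
  have hswap : ∑ l, ∑ j ∈ univ.filter (fun j => j < l), g l j
      = ∑ l, ∑ j ∈ univ.filter (fun j => l < j), g j l :=
    Finset.sum_comm' fun l j => by simp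
  simp only [hsplit, sum_union (hdisj _), sum_add_distrib, hswap]

theorem sub_div_sub_add_sub_div_sub_eq_one {K : Type*} [Field K] {a b : K} (hab : a ≠ b) (c : K) :
    (a - c) / (a - b) + (b - c) / (b - a) = 1 := by
  have hab' : a - b ≠ 0 := sub_ne_zero.mpr hab
  rw [← neg_sub a b, div_neg, ← sub_eq_add_neg, ← sub_div, div_eq_one_iff_eq hab']
  ring

theorem stmt4_general (n : ℕ) (t : Fin n → ℝ)
    (hdist : Function.Injective t) (s : Fin n) (d : ℕ → ℝ) :
    ∑ l ∈ univ.filter (fun l => l ≠ s),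
      ∑ j ∈ univ.filter (fun j => j ≠ l),
        d (Nat.dist (j : ℕ) (l : ℕ)) * ((t l - t s) / (t l - t j))
    = ∑ l : Fin n, ∑ j ∈ univ.filter (fun j => l < j), d ((j : ℕ) - (l : ℕ)) := by
  have hvanish : ∀ l ∈ (univ : Finset (Fin n)), ∑ j ∈ univ.filter (fun j => j ≠ l),
      d (Nat.dist (j : ℕ) (l : ℕ)) * ((t l - t s) / (t l - t j)) ≠ 0 → l ≠ s := by
    rintro l - hne rfl
    simp at hne
  rw [sum_filter_of_ne hvanish, sum_sum_ne_eq_sum_sum_lt_add_swap]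
  refine sum_congr rfl fun l _ => sum_congr rfl fun j hj => ?_
  have hlj : l < j := (mem_filter.mp hj).2
  rw [Nat.dist_comm (l : ℕ), ← mul_add,
    sub_div_sub_add_sub_div_sub_eq_one (hdist.ne hlj.ne), mul_one,
    Nat.dist_comm, Nat.dist_eq_sub_of_le (Fin.le_iff_val_le_val.mp hlj.le)]

/-- `∑_{l≠s} ∑_{j≠l} d(|j−l|) (t_l − t_s)/(t_l − t_j) = ∑_{l<j} d(j−l)`
for pairwise distinct reals `t₁,…,tₙ`. -/
theorem stmt4 (n : ℕ) (hn : 2 ≤ n) (t : Fin n → ℝ)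
    (hdist : Function.Injective t) (s : Fin n) (d : ℕ → ℝ) :
    ∑ l ∈ univ.filter (fun l => l ≠ s),
      ∑ j ∈ univ.filter (fun j => j ≠ l),
        d (Nat.dist (j : ℕ) (l : ℕ)) * ((t l - t s) / (t l - t j))
    = ∑ l : Fin n, ∑ j ∈ univ.filter (fun j => l < j), d ((j : ℕ) - (l : ℕ)) :=
  stmt4_general n t hdist s d
end

section
/- For λ > −1/4, the integral I₃(λ) := ∫_{0<x₁<x₂<x₃<1} (x₂−x₁)^{2λ}(x₃−x₂)^{2λ}(x₃−x₁)^{4λ} dx equals [1/((2+8λ)(3+8λ))] · Γ(1+2λ)²/Γ(2+4λ). -/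
open MeasureTheory Real

section Aux

lemma beta_val {p : ℝ} (hp : -1 < p) :
    ∫ t in (0:ℝ)..1, t ^ p * (1 - t) ^ p = Real.Gamma (1 + p) ^ 2 / Real.Gamma (2 + 2 * p) := by
  have hre : 0 < (1 + (p:ℂ)).re := by simp; linarith
  have key := Complex.Gamma_mul_Gamma_eq_betaIntegral hre hre
  have h1 : Complex.betaIntegral (1 + p) (1 + p)
      = ((∫ t in (0:ℝ)..1, t ^ p * (1 - t) ^ p : ℝ) : ℂ) := by
    rw [Complex.betaIntegral, ← intervalIntegral.integral_ofReal]
    refine intervalIntegral.integral_congr fun x hx => ?_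
    rw [Set.uIcc_of_le (by norm_num)] at hx
    obtain ⟨hx0, hx1⟩ := hx
    have h1x : (0:ℝ) ≤ 1 - x := by linarith
    rw [Complex.ofReal_mul, Complex.ofReal_cpow hx0, Complex.ofReal_cpow h1x]
    push_cast
    ring_nf
  rw [h1] at key
  have hG : (0:ℝ) < Real.Gamma (2 + 2 * p) := Real.Gamma_pos_of_pos (by linarith)
  have hcast : (1 + (p:ℂ)) + (1 + (p:ℂ)) = ((2 + 2 * p : ℝ) : ℂ) := by push_cast; ring
  have hcast2 : (1 + (p:ℂ)) = ((1 + p : ℝ) : ℂ) := by push_cast; ring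
  rw [hcast, hcast2, Complex.Gamma_ofReal, Complex.Gamma_ofReal] at key
  have : ((Real.Gamma (1+p) * Real.Gamma (1+p) : ℝ) : ℂ)
      = ((Real.Gamma (2+2*p) * ∫ t in (0:ℝ)..1, t ^ p * (1 - t) ^ p : ℝ) : ℂ) := by
    push_cast; exact key
  have h2 := Complex.ofReal_inj.mp this
  field_simp
  rw [show (1 + p) * 2 = 2 + 2 * p by ring, eq_div_iff hG.ne', sq]; linarith [h2]

lemma beta_integrable {p : ℝ} (hp : -1 < p) :
    IntervalIntegrable (fun t : ℝ => t ^ p * (1 - t) ^ p) volume 0 1 := by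
  have hre : 0 < (1 + (p:ℂ)).re := by simp; linarith
  have h := Complex.betaIntegral_convergent hre hre
  rw [intervalIntegrable_iff] at h ⊢
  have h2 := h.re
  refine h2.congr ?_
  refine (ae_restrict_iff' measurableSet_uIoc).mpr (ae_of_all _ fun x hx => ?_)
  rw [Set.uIoc_of_le (by norm_num : (0:ℝ) ≤ 1)] at hx
  obtain ⟨hx0, hx1⟩ := hx
  have h1x : (0:ℝ) ≤ 1 - x := by linarith
  have : ((x:ℂ) ^ ((1 + (p:ℂ)) - 1) * ((1:ℂ) - x) ^ ((1 + (p:ℂ)) - 1))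
      = ((x ^ p * (1 - x) ^ p : ℝ) : ℂ) := by
    rw [Complex.ofReal_mul, Complex.ofReal_cpow hx0.le, Complex.ofReal_cpow h1x]
    push_cast; ring_nf
  simp only [this, Complex.ofReal_re, RCLike.re_to_complex]

lemma inner_integrable {p : ℝ} (hp : -1 < p) {a b : ℝ} (hab : a < b) :
    IntervalIntegrable (fun x : ℝ => (x - a) ^ p * (b - x) ^ p) volume a b := by
  set s := b - a with hs
  have hs0 : 0 < s := by simp [hs]; linarith
  have h1 := (beta_integrable hp).comp_mul_left (c := s⁻¹)
  rw [zero_div, one_div, inv_inv] at h1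
  have h2 := (h1.comp_sub_right a).const_mul (s ^ (2 * p))
  rw [zero_add] at h2
  have hba : s + a = b := by rw [hs]; ring
  rw [hba] at h2
  refine h2.congr_ae ?_
  refine (ae_restrict_iff' measurableSet_uIoc).mpr (ae_of_all _ fun x hx => ?_)
  rw [Set.uIoc_of_le hab.le] at hx
  obtain ⟨hx0, hx1⟩ := hx
  have hxa : 0 ≤ x - a := by linarith
  have hbx : 0 ≤ b - x := by linarith
  have e1 : s⁻¹ * (x - a) = (x - a) / s := by ring
  have e2 : 1 - (x - a) / s = (b - x) / s := by field_simp; ring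
  simp only [e1, e2, Real.div_rpow hxa hs0.le, Real.div_rpow hbx hs0.le]
  rw [show (2:ℝ) * p = p + p by ring, Real.rpow_add hs0]
  have hsp : s ^ p ≠ 0 := (Real.rpow_pos_of_pos hs0 p).ne'
  field_simp

lemma inner_integral_eval {p : ℝ} {a b : ℝ} (hab : a < b) :
    ∫ x in a..b, (x - a) ^ p * (b - x) ^ p
      = (b - a) ^ (2 * p + 1) * ∫ t in (0:ℝ)..1, t ^ p * (1 - t) ^ p := by
  set s := b - a with hs
  have hs0 : 0 < s := by simp [hs]; linarith
  have step1 : ∫ x in a..b, (x - a) ^ p * (b - x) ^ p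
      = ∫ u in (0:ℝ)..s, u ^ p * (s - u) ^ p := by
    have := intervalIntegral.integral_comp_sub_right
      (a := a) (b := b) (fun u => u ^ p * (s - u) ^ p) a
    rw [sub_self] at this
    rw [← this]
    refine intervalIntegral.integral_congr fun x hx => ?_
    have : s - (x - a) = b - x := by rw [hs]; ring
    rw [this]
  have step2 : ∫ u in (0:ℝ)..s, u ^ p * (s - u) ^ p
      = s • ∫ t in (0:ℝ)..1, (fun u => u ^ p * (s - u) ^ p) (s * t) := by
    rw [intervalIntegral.smul_integral_comp_mul_left (fun u => u ^ p * (s - u) ^ p) s]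
    norm_num
  have step3 : ∫ t in (0:ℝ)..1, (fun u => u ^ p * (s - u) ^ p) (s * t)
      = s ^ (2 * p) * ∫ t in (0:ℝ)..1, t ^ p * (1 - t) ^ p := by
    rw [← intervalIntegral.integral_const_mul]
    refine intervalIntegral.integral_congr fun t ht => ?_
    rw [Set.uIcc_of_le (by norm_num : (0:ℝ) ≤ 1)] at ht
    obtain ⟨ht0, ht1⟩ := ht
    simp only
    have e1 : s - s * t = s * (1 - t) := by ring
    rw [e1, Real.mul_rpow hs0.le ht0, Real.mul_rpow hs0.le (by linarith)]
    rw [show (2:ℝ) * p = p + p by ring, Real.rpow_add hs0]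
    ring
  rw [step1, step2, step3, smul_eq_mul, Real.rpow_add hs0, Real.rpow_one]
  ring

lemma shifted_rpow_integral {e : ℝ} (he : -1 < e) (a b : ℝ) :
    ∫ x in a..b, (x - a) ^ e = (b - a) ^ (e + 1) / (e + 1) := by
  have := intervalIntegral.integral_comp_sub_right (a := a) (b := b)
    (fun u : ℝ => u ^ e) a
  rw [sub_self] at this
  rw [this, integral_rpow (Or.inl he), Real.zero_rpow (by linarith), sub_zero]

lemma one_sub_rpow_integral {e : ℝ} (he : -1 < e) :
    ∫ x in (0:ℝ)..1, (1 - x) ^ e = 1 / (e + 1) := by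
  have := intervalIntegral.integral_comp_sub_left (a := (0:ℝ)) (b := 1)
    (fun u : ℝ => u ^ e) 1
  rw [sub_self, sub_zero] at this
  rw [this, intervalIntegral.integral_symm, integral_rpow (Or.inl he),
    Real.zero_rpow (by linarith), Real.one_rpow]
  ring

lemma shifted_rpow_integrable {e : ℝ} (he : -1 < e) (a b : ℝ) :
    IntervalIntegrable (fun x : ℝ => (x - a) ^ e) volume a b := by
  have := (intervalIntegral.intervalIntegrable_rpow' (a := 0) (b := b - a) he).comp_sub_right a
  simpa using this

lemma one_sub_rpow_integrable {e : ℝ} (he : -1 < e) :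
    IntervalIntegrable (fun x : ℝ => (1 - x) ^ e) volume 0 1 := by
  have := (intervalIntegral.intervalIntegrable_rpow' (a := 0) (b := 1) he).comp_sub_left 1
  simpa using this.symm

/-- Inner set for the two outer variables. -/
def Tset (x1 : ℝ) : Set (ℝ × ℝ) := {z | x1 < z.1 ∧ z.1 < z.2 ∧ z.2 < 1}

/-- Integrand with `x1` fixed. -/
noncomputable def gfn (lam x1 : ℝ) : ℝ × ℝ → ℝ := fun z =>
  (z.1 - x1) ^ (2 * lam) * (z.2 - z.1) ^ (2 * lam) * (z.2 - x1) ^ (4 * lam)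

/-- The beta integral constant. -/
noncomputable def Bfn (lam : ℝ) : ℝ := ∫ t in (0:ℝ)..1, t ^ (2 * lam) * (1 - t) ^ (2 * lam)

lemma Tset_measurable (x1 : ℝ) : MeasurableSet (Tset x1) := by
  have : Tset x1 = {z : ℝ × ℝ | x1 < z.1} ∩ {z | z.1 < z.2} ∩ {z | z.2 < 1} := by
    ext z; simp [Tset]; tauto
  rw [this]
  exact ((measurableSet_lt measurable_const measurable_fst).inter
    (measurableSet_lt measurable_fst measurable_snd)).inter
    (measurableSet_lt measurable_snd measurable_const)

lemma gfn_measurable (lam x1 : ℝ) : Measurable (gfn lam x1) := by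
  unfold gfn
  exact (((measurable_fst.sub measurable_const).pow measurable_const).mul
    ((measurable_snd.sub measurable_fst).pow measurable_const)).mul
    ((measurable_snd.sub measurable_const).pow measurable_const)

lemma gfn_ind_nonneg (lam x1 : ℝ) (z : ℝ × ℝ) :
    0 ≤ (Tset x1).indicator (gfn lam x1) z := by
  refine Set.indicator_nonneg (fun w hw => ?_) z
  obtain ⟨h1, h2, h3⟩ := hw
  unfold gfn
  have a1 : (0:ℝ) ≤ w.1 - x1 := by linarith
  have a2 : (0:ℝ) ≤ w.2 - w.1 := by linarith
  have a3 : (0:ℝ) ≤ w.2 - x1 := by linarith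
  exact mul_nonneg (mul_nonneg (Real.rpow_nonneg a1 _) (Real.rpow_nonneg a2 _))
    (Real.rpow_nonneg a3 _)

lemma sec2 (lam x1 x3 : ℝ) :
    (fun x2 => (Tset x1).indicator (gfn lam x1) (x2, x3))
      = if x3 < 1 then (Set.Ioo x1 x3).indicator
          (fun x2 => (x2 - x1) ^ (2 * lam) * (x3 - x2) ^ (2 * lam) * (x3 - x1) ^ (4 * lam))
        else 0 := by
  funext x2
  by_cases h : x3 < 1
  · rw [if_pos h]
    by_cases hm : x2 ∈ Set.Ioo x1 x3
    · rw [Set.indicator_of_mem hm,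
        Set.indicator_of_mem (by exact ⟨hm.1, hm.2, h⟩ : (x2, x3) ∈ Tset x1)]
      rfl
    · rw [Set.indicator_of_notMem hm, Set.indicator_of_notMem]
      intro hc
      exact hm ⟨hc.1, hc.2.1⟩
  · rw [if_neg h]
    rw [Set.indicator_of_notMem]
    · rfl
    · intro hc; exact h hc.2.2

lemma sec2_integrable {lam : ℝ} (hlam : -(1 / 4 : ℝ) < lam) (x1 x3 : ℝ) :
    Integrable (fun x2 => (Tset x1).indicator (gfn lam x1) (x2, x3)) volume := by
  have hp : (-1:ℝ) < 2 * lam := by linarith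
  rw [sec2]
  split_ifs with h1
  · by_cases h2 : x1 < x3
    · have hI : IntervalIntegrable
          (fun x2 => (x2 - x1) ^ (2 * lam) * (x3 - x2) ^ (2 * lam) * (x3 - x1) ^ (4 * lam))
          volume x1 x3 := (inner_integrable hp h2).mul_const _
      rw [intervalIntegrable_iff_integrableOn_Ioo_of_le h2.le] at hI
      exact (integrable_indicator_iff measurableSet_Ioo).mpr hI
    · rw [Set.Ioo_eq_empty h2]
      simp only [Set.indicator_empty]
      exact integrable_zero _ _ _
  · exact integrable_zero _ _ _

lemma claimA2 {lam : ℝ} (hlam : -(1 / 4 : ℝ) < lam) (x1 x3 : ℝ) :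
    ∫ x2, (Tset x1).indicator (gfn lam x1) (x2, x3)
      = (Set.Ioo x1 1).indicator (fun u => (u - x1) ^ (8 * lam + 1) * Bfn lam) x3 := by
  have hp : (-1:ℝ) < 2 * lam := by linarith
  rw [sec2]
  by_cases hm : x3 ∈ Set.Ioo x1 1
  · obtain ⟨h13, h31⟩ := hm
    rw [if_pos h31, integral_indicator measurableSet_Ioo,
      ← MeasureTheory.integral_Ioc_eq_integral_Ioo,
      ← intervalIntegral.integral_of_le h13.le,
      intervalIntegral.integral_mul_const, inner_integral_eval h13,
      Set.indicator_of_mem (show x3 ∈ Set.Ioo x1 1 from ⟨h13, h31⟩)]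
    have hpos : (0:ℝ) < x3 - x1 := by linarith
    rw [mul_right_comm, ← Real.rpow_add hpos,
      show 2 * (2 * lam) + 1 + 4 * lam = 8 * lam + 1 by ring]
    unfold Bfn
    rfl
  · rw [Set.indicator_of_notMem hm]
    by_cases h1 : x3 < 1
    · rw [if_pos h1]
      have h2 : ¬ x1 < x3 := fun hc => hm ⟨hc, h1⟩
      rw [Set.Ioo_eq_empty h2]
      simp
    · rw [if_neg h1]
      simp

lemma claimA' {lam : ℝ} (hlam : -(1 / 4 : ℝ) < lam) (x1 : ℝ) :
    Integrable ((Tset x1).indicator (gfn lam x1))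
      ((volume : Measure ℝ).prod (volume : Measure ℝ)) := by
  have h81 : (-1:ℝ) < 8 * lam + 1 := by linarith
  refine (integrable_prod_iff' ?_).mpr ⟨?_, ?_⟩
  · exact (((gfn_measurable lam x1).indicator (Tset_measurable x1))).aestronglyMeasurable
  · exact ae_of_all _ fun x3 => sec2_integrable hlam x1 x3
  · have heq : (fun x3 => ∫ x2, ‖(Tset x1).indicator (gfn lam x1) (x2, x3)‖)
        = (Set.Ioo x1 1).indicator (fun u => (u - x1) ^ (8 * lam + 1) * Bfn lam) := by
      funext x3
      have e : ∀ x2 : ℝ, ‖(Tset x1).indicator (gfn lam x1) (x2, x3)‖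
          = (Tset x1).indicator (gfn lam x1) (x2, x3) :=
        fun x2 => Real.norm_of_nonneg (gfn_ind_nonneg lam x1 _)
      simp only [e]
      exact claimA2 hlam x1 x3
    rw [heq]
    refine (integrable_indicator_iff measurableSet_Ioo).mpr ?_
    by_cases hx1 : x1 < 1
    · have hI : IntervalIntegrable (fun u : ℝ => (u - x1) ^ (8 * lam + 1) * Bfn lam)
          volume x1 1 := (shifted_rpow_integrable h81 x1 1).mul_const _
      rw [intervalIntegrable_iff_integrableOn_Ioo_of_le hx1.le] at hI
      exact hI
    · rw [Set.Ioo_eq_empty hx1]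
      simp [integrableOn_empty]

lemma claimA {lam : ℝ} (hlam : -(1 / 4 : ℝ) < lam) {x1 : ℝ} (hx1 : x1 < 1) :
    ∫ z, (Tset x1).indicator (gfn lam x1) z ∂(volume : Measure (ℝ × ℝ))
      = (Bfn lam / (8 * lam + 2)) * (1 - x1) ^ (8 * lam + 2) := by
  have h81 : (-1:ℝ) < 8 * lam + 1 := by linarith
  rw [Measure.volume_eq_prod, MeasureTheory.integral_prod_symm _ (claimA' hlam x1)]
  simp only [claimA2 hlam x1]
  rw [integral_indicator measurableSet_Ioo, ← MeasureTheory.integral_Ioc_eq_integral_Ioo,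
    ← intervalIntegral.integral_of_le hx1.le, intervalIntegral.integral_mul_const,
    shifted_rpow_integral h81 x1 1, show (8:ℝ) * lam + 1 + 1 = 8 * lam + 2 by ring]
  ring

end Aux

section Level3

/-- The full simplex set. -/
def Sset : Set (ℝ × ℝ × ℝ) := {y | 0 < y.1 ∧ y.1 < y.2.1 ∧ y.2.1 < y.2.2 ∧ y.2.2 < 1}

/-- The full integrand. -/
noncomputable def ffn (lam : ℝ) : ℝ × ℝ × ℝ → ℝ := fun y =>
  (y.2.1 - y.1) ^ (2 * lam) * (y.2.2 - y.2.1) ^ (2 * lam) * (y.2.2 - y.1) ^ (4 * lam)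

lemma Sset_measurable : MeasurableSet Sset := by
  have : Sset = {y : ℝ × ℝ × ℝ | 0 < y.1} ∩ {y | y.1 < y.2.1}
      ∩ {y | y.2.1 < y.2.2} ∩ {y | y.2.2 < 1} := by
    ext y; simp [Sset]; tauto
  rw [this]
  exact (((measurableSet_lt measurable_const measurable_fst).inter
    (measurableSet_lt measurable_fst (measurable_fst.comp measurable_snd))).inter
    (measurableSet_lt (measurable_fst.comp measurable_snd)
      (measurable_snd.comp measurable_snd))).inter
    (measurableSet_lt (measurable_snd.comp measurable_snd) measurable_const)

lemma ffn_measurable (lam : ℝ) : Measurable (ffn lam) := by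
  unfold ffn
  exact ((((measurable_fst.comp measurable_snd).sub measurable_fst).pow measurable_const).mul
    (((measurable_snd.comp measurable_snd).sub
      (measurable_fst.comp measurable_snd)).pow measurable_const)).mul
    (((measurable_snd.comp measurable_snd).sub measurable_fst).pow measurable_const)

lemma ffn_ind_nonneg (lam : ℝ) (y : ℝ × ℝ × ℝ) :
    0 ≤ Sset.indicator (ffn lam) y := by
  refine Set.indicator_nonneg (fun w hw => ?_) y
  obtain ⟨h0, h1, h2, h3⟩ := hw
  unfold ffn
  have a1 : (0:ℝ) ≤ w.2.1 - w.1 := by linarith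
  have a2 : (0:ℝ) ≤ w.2.2 - w.2.1 := by linarith
  have a3 : (0:ℝ) ≤ w.2.2 - w.1 := by linarith
  exact mul_nonneg (mul_nonneg (Real.rpow_nonneg a1 _) (Real.rpow_nonneg a2 _))
    (Real.rpow_nonneg a3 _)

lemma sec3 (lam x1 : ℝ) :
    (fun z : ℝ × ℝ => Sset.indicator (ffn lam) (x1, z))
      = if 0 < x1 then (Tset x1).indicator (gfn lam x1) else 0 := by
  funext z
  by_cases h : 0 < x1
  · rw [if_pos h]
    by_cases hm : z ∈ Tset x1
    · rw [Set.indicator_of_mem hm,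
        Set.indicator_of_mem (show (x1, z) ∈ Sset from ⟨h, hm.1, hm.2.1, hm.2.2⟩)]
      rfl
    · rw [Set.indicator_of_notMem hm, Set.indicator_of_notMem]
      intro hc
      exact hm ⟨hc.2.1, hc.2.2.1, hc.2.2.2⟩
  · rw [if_neg h, Set.indicator_of_notMem (fun hc => h hc.1)]
    rfl

lemma Tset_empty {x1 : ℝ} (hx1 : ¬ x1 < 1) : Tset x1 = ∅ := by
  ext z
  simp only [Tset, Set.mem_setOf_eq, Set.mem_empty_iff_false, iff_false]
  rintro ⟨a, b, c⟩
  exact hx1 (by linarith)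

lemma claimB {lam : ℝ} (hlam : -(1 / 4 : ℝ) < lam) :
    (fun x1 => ∫ z, Sset.indicator (ffn lam) (x1, z) ∂(volume : Measure (ℝ × ℝ)))
      = (Set.Ioo (0:ℝ) 1).indicator
          (fun x1 => (Bfn lam / (8 * lam + 2)) * (1 - x1) ^ (8 * lam + 2)) := by
  funext x1
  rw [sec3]
  by_cases h0 : 0 < x1
  · rw [if_pos h0]
    by_cases h1 : x1 < 1
    · rw [claimA hlam h1,
        Set.indicator_of_mem (show x1 ∈ Set.Ioo (0:ℝ) 1 from ⟨h0, h1⟩)]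
    · rw [Tset_empty h1,
        Set.indicator_of_notMem (show x1 ∉ Set.Ioo (0:ℝ) 1 from fun hc => h1 hc.2)]
      simp
  · rw [if_neg h0,
      Set.indicator_of_notMem (show x1 ∉ Set.Ioo (0:ℝ) 1 from fun hc => h0 hc.1)]
    simp

lemma main_integrable {lam : ℝ} (hlam : -(1 / 4 : ℝ) < lam) :
    Integrable (Sset.indicator (ffn lam))
      ((volume : Measure ℝ).prod (volume : Measure (ℝ × ℝ))) := by
  have h82 : (-1:ℝ) < 8 * lam + 2 := by linarith
  refine (integrable_prod_iff ?_).mpr ⟨?_, ?_⟩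
  · exact ((ffn_measurable lam).indicator Sset_measurable).aestronglyMeasurable
  · refine ae_of_all _ fun x1 => ?_
    rw [sec3]
    split_ifs with h0
    · rw [Measure.volume_eq_prod]
      exact claimA' hlam x1
    · exact integrable_zero _ _ _
  · have heq : (fun x1 => ∫ z, ‖Sset.indicator (ffn lam) (x1, z)‖ ∂(volume : Measure (ℝ × ℝ)))
        = (Set.Ioo (0:ℝ) 1).indicator
            (fun x1 => (Bfn lam / (8 * lam + 2)) * (1 - x1) ^ (8 * lam + 2)) := by
      funext x1
      have e : ∀ z : ℝ × ℝ, ‖Sset.indicator (ffn lam) (x1, z)‖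
          = Sset.indicator (ffn lam) (x1, z) :=
        fun z => Real.norm_of_nonneg (ffn_ind_nonneg lam _)
      simp only [e]
      exact congrFun (claimB hlam) x1
    rw [heq]
    refine (integrable_indicator_iff measurableSet_Ioo).mpr ?_
    have hI : IntervalIntegrable
        (fun x1 : ℝ => (Bfn lam / (8 * lam + 2)) * (1 - x1) ^ (8 * lam + 2)) volume 0 1 :=
      (one_sub_rpow_integrable h82).const_mul _
    rw [intervalIntegrable_iff_integrableOn_Ioo_of_le (by norm_num : (0:ℝ) ≤ 1)] at hI
    exact hI

end Level3

/-- `I₃(λ) = ∫_{0<x₁<x₂<x₃<1} (x₂−x₁)^{2λ}(x₃−x₂)^{2λ}(x₃−x₁)^{4λ} dx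
  = [1/((2+8λ)(3+8λ))] Γ(1+2λ)²/Γ(2+4λ)` for `λ > −1/4`. -/
theorem stmt6 (lam : ℝ) (hlam : -(1 / 4 : ℝ) < lam) :
    ∫ x in {y : ℝ × ℝ × ℝ | 0 < y.1 ∧ y.1 < y.2.1 ∧ y.2.1 < y.2.2 ∧ y.2.2 < 1},
        (x.2.1 - x.1) ^ (2 * lam) * (x.2.2 - x.2.1) ^ (2 * lam) *
          (x.2.2 - x.1) ^ (4 * lam)
      = 1 / ((2 + 8 * lam) * (3 + 8 * lam)) *
          (Real.Gamma (1 + 2 * lam) ^ 2 / Real.Gamma (2 + 4 * lam)) := by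
  have hp : (-1:ℝ) < 2 * lam := by linarith
  have h82 : (-1:ℝ) < 8 * lam + 2 := by linarith
  have hB : Bfn lam = Real.Gamma (1 + 2 * lam) ^ 2 / Real.Gamma (2 + 4 * lam) := by
    unfold Bfn
    rw [beta_val hp, show (2:ℝ) + 2 * (2 * lam) = 2 + 4 * lam by ring]
  have hgoal : (∫ x in {y : ℝ × ℝ × ℝ | 0 < y.1 ∧ y.1 < y.2.1 ∧ y.2.1 < y.2.2 ∧ y.2.2 < 1},
        (x.2.1 - x.1) ^ (2 * lam) * (x.2.2 - x.2.1) ^ (2 * lam) *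
          (x.2.2 - x.1) ^ (4 * lam))
      = ∫ x in Sset, ffn lam x := rfl
  rw [hgoal, ← integral_indicator Sset_measurable, Measure.volume_eq_prod,
    MeasureTheory.integral_prod _ (main_integrable hlam), claimB hlam,
    integral_indicator measurableSet_Ioo, ← MeasureTheory.integral_Ioc_eq_integral_Ioo,
    ← intervalIntegral.integral_of_le (by norm_num : (0:ℝ) ≤ 1),
    intervalIntegral.integral_const_mul, one_sub_rpow_integral h82, hB]
  have hn1 : (8:ℝ) * lam + 2 ≠ 0 := by linarith
  have hn2 : (8:ℝ) * lam + 2 + 1 ≠ 0 := by linarith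
  have hn3 : (2:ℝ) + 8 * lam ≠ 0 := by linarith
  have hn4 : (3:ℝ) + 8 * lam ≠ 0 := by linarith
  field_simp
  ring
end

section
/- For λ > −1/8, J₃(λ) := ∫_{0<x₁<x₂<x₃<1} (x₂−x₁)^{4λ}(x₃−x₂)^{4λ}(x₃−x₁)^{2λ} dx = [1/((2+10λ)(3+10λ))] · Γ(1+4λ)²/Γ(2+8λ). -/
/-! Integrating out the middle point first, the substitution `x₂ = x₁ + t (x₃ - x₁)` turns the
inner integral into `(x₃ - x₁) ^ (10λ + 1) · B(1 + 4λ, 1 + 4λ)`, and the remaining integral of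
`(x₃ - x₁) ^ q` over `0 < x₁ < x₃ < 1` is `1 / ((q + 1) (q + 2))`. Working with lower Lebesgue
integrals lets Tonelli's theorem do the iteration without any integrability bookkeeping. -/

open MeasureTheory Real Set ProbabilityTheory
open scoped ENNReal

namespace ProbabilityTheory

theorem beta_comm (α β : ℝ) : beta α β = beta β α := by
  rw [beta, beta, mul_comm, add_comm]

theorem beta_one_right {α : ℝ} (hα : 0 < α) : beta α 1 = 1 / α := by
  rw [beta, Real.Gamma_one, Real.Gamma_add_one hα.ne']
  field_simp [(Real.Gamma_pos_of_pos hα).ne']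

end ProbabilityTheory

theorem lintegral_Ioo_rpow_mul_one_sub_rpow {a b : ℝ} (ha : -1 < a) (hb : -1 < b) :
    ∫⁻ t in Ioo 0 1, ENNReal.ofReal (t ^ a * (1 - t) ^ b)
      = ENNReal.ofReal (beta (a + 1) (b + 1)) := by
  have hB : 0 < beta (a + 1) (b + 1) := beta_pos (by linarith) (by linarith)
  have hpdf := lintegral_betaPDF_eq_one (α := a + 1) (β := b + 1) (by linarith) (by linarith)
  simp only [lintegral_betaPDF, add_sub_cancel_right, mul_assoc] at hpdf
  calc ∫⁻ t in Ioo 0 1, ENNReal.ofReal (t ^ a * (1 - t) ^ b)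
      = ∫⁻ t in Ioo 0 1, ENNReal.ofReal (beta (a + 1) (b + 1)) *
          ENNReal.ofReal (1 / beta (a + 1) (b + 1) * (t ^ a * (1 - t) ^ b)) := by
        congr 1 with t
        rw [← ENNReal.ofReal_mul hB.le, ← mul_assoc, mul_one_div_cancel hB.ne', one_mul]
    _ = ENNReal.ofReal (beta (a + 1) (b + 1)) := by
        rw [lintegral_const_mul' _ _ ENNReal.ofReal_ne_top, hpdf, mul_one]

theorem lintegral_Ioo_sub_rpow_mul_sub_rpow {a b c d : ℝ} (ha : -1 < a) (hb : -1 < b)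
    (hcd : c < d) :
    ∫⁻ x in Ioo c d, ENNReal.ofReal ((x - c) ^ a * (d - x) ^ b)
      = ENNReal.ofReal ((d - c) ^ (a + b + 1) * beta (a + 1) (b + 1)) := by
  have hk : 0 < d - c := sub_pos.2 hcd
  have himage : (fun t => (d - c) * t + c) '' Ioo 0 1 = Ioo c d := by
    rw [image_affine_Ioo hk]; congr 1 <;> ring
  have hderiv : ∀ t ∈ Ioo (0 : ℝ) 1,
      HasDerivWithinAt (fun t => (d - c) * t + c) (d - c) (Ioo 0 1) t := fun t _ => by
    simpa using (((hasDerivAt_id t).const_mul (d - c)).add_const c).hasDerivWithinAt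
  have hinj : InjOn (fun t => (d - c) * t + c) (Ioo 0 1) := fun s _ t _ hst => by
    simpa [hk.ne'] using hst
  rw [← himage, lintegral_image_eq_lintegral_abs_deriv_mul measurableSet_Ioo hderiv hinj,
    ENNReal.ofReal_mul (rpow_nonneg hk.le _), ← lintegral_Ioo_rpow_mul_one_sub_rpow ha hb,
    ← lintegral_const_mul' _ _ ENNReal.ofReal_ne_top]
  refine setLIntegral_congr_fun measurableSet_Ioo fun t ht => ?_
  have h1 : (d - c) * t + c - c = (d - c) * t := by ring
  have h2 : d - ((d - c) * t + c) = (d - c) * (1 - t) := by ring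
  rw [abs_of_pos hk, h1, h2, ← ENNReal.ofReal_mul hk.le, ← ENNReal.ofReal_mul (rpow_nonneg hk.le _),
    mul_rpow hk.le ht.1.le, mul_rpow hk.le (sub_nonneg.2 ht.2.le), rpow_add_one hk.ne', rpow_add hk]
  congr 1
  ring

theorem lintegral_Ioo_sub_rpow_left {a c d : ℝ} (ha : -1 < a) (hcd : c < d) :
    ∫⁻ x in Ioo c d, ENNReal.ofReal ((x - c) ^ a)
      = ENNReal.ofReal ((d - c) ^ (a + 1) / (a + 1)) := by
  simpa only [rpow_zero, mul_one, add_zero, zero_add, beta_one_right (neg_lt_iff_pos_add.1 ha),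
    mul_one_div] using lintegral_Ioo_sub_rpow_mul_sub_rpow ha neg_one_lt_zero hcd

theorem lintegral_Ioo_sub_rpow_right {b c d : ℝ} (hb : -1 < b) (hcd : c < d) :
    ∫⁻ x in Ioo c d, ENNReal.ofReal ((d - x) ^ b)
      = ENNReal.ofReal ((d - c) ^ (b + 1) / (b + 1)) := by
  simpa only [rpow_zero, one_mul, zero_add, beta_comm 1, beta_one_right (neg_lt_iff_pos_add.1 hb),
    mul_one_div] using lintegral_Ioo_sub_rpow_mul_sub_rpow neg_one_lt_zero hb hcd

theorem setLIntegral_prod_of_slices {α β : Type*} [MeasurableSpace α] [MeasurableSpace β]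
    {μ : Measure α} {ν : Measure β} [SFinite ν] {A : Set α} {B : α → Set β}
    (hA : MeasurableSet A) (hAB : MeasurableSet {z : α × β | z.1 ∈ A ∧ z.2 ∈ B z.1})
    {f : α × β → ℝ≥0∞} (hf : Measurable f) :
    ∫⁻ z in {z : α × β | z.1 ∈ A ∧ z.2 ∈ B z.1}, f z ∂μ.prod ν
      = ∫⁻ x in A, ∫⁻ y in B x, f (x, y) ∂ν ∂μ := by
  rw [← lintegral_indicator hAB, lintegral_prod _ (hf.indicator hAB).aemeasurable,
    ← lintegral_indicator hA]
  congr 1 with x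
  by_cases hx : x ∈ A
  · have hslice : Prod.mk x ⁻¹' {z : α × β | z.1 ∈ A ∧ z.2 ∈ B z.1} = B x := by
      ext y; simp [hx]
    rw [indicator_of_mem hx, ← hslice, ← lintegral_indicator (measurable_prodMk_left hAB)]
    rfl
  · simp [hx]

theorem setLIntegral_prod_of_slices_symm {α β : Type*} [MeasurableSpace α] [MeasurableSpace β]
    {μ : Measure α} {ν : Measure β} [SFinite μ] [SFinite ν] {A : Set β} {B : β → Set α}
    (hA : MeasurableSet A) (hAB : MeasurableSet {z : α × β | z.2 ∈ A ∧ z.1 ∈ B z.2})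
    {f : α × β → ℝ≥0∞} (hf : Measurable f) :
    ∫⁻ z in {z : α × β | z.2 ∈ A ∧ z.1 ∈ B z.2}, f z ∂μ.prod ν
      = ∫⁻ y in A, ∫⁻ x in B y, f (x, y) ∂μ ∂ν := by
  have hAB' : MeasurableSet {z : β × α | z.1 ∈ A ∧ z.2 ∈ B z.1} := measurable_swap hAB
  have h := setLIntegral_prod_of_slices (μ := ν) (ν := μ) hA hAB' (hf.comp measurable_swap)
  rw [← lintegral_indicator hAB'] at h
  rw [← lintegral_indicator hAB, ← lintegral_prod_swap]
  exact h

theorem setLIntegral_ordered_triple {f : ℝ × ℝ × ℝ → ℝ≥0∞} (hf : Measurable f) :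
    ∫⁻ x in {y : ℝ × ℝ × ℝ | 0 < y.1 ∧ y.1 < y.2.1 ∧ y.2.1 < y.2.2 ∧ y.2.2 < 1}, f x
      = ∫⁻ x₁ in Ioo 0 1, ∫⁻ x₃ in Ioo x₁ 1, ∫⁻ x₂ in Ioo x₁ x₃, f (x₁, x₂, x₃) := by
  have hset : {y : ℝ × ℝ × ℝ | 0 < y.1 ∧ y.1 < y.2.1 ∧ y.2.1 < y.2.2 ∧ y.2.2 < 1}
      = {z | z.1 ∈ Ioo 0 1 ∧ z.2 ∈ {p : ℝ × ℝ | p.2 ∈ Ioo z.1 1 ∧ p.1 ∈ Ioo z.1 p.2}} := by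
    ext ⟨x₁, x₂, x₃⟩
    simp only [mem_ofPred_eq, mem_Ioo]
    constructor
    · rintro ⟨h₁, h₂, h₃, h₄⟩
      exact ⟨⟨h₁, by linarith⟩, ⟨by linarith, h₄⟩, h₂, h₃⟩
    · rintro ⟨⟨h₁, -⟩, ⟨-, h₄⟩, h₂, h₃⟩
      exact ⟨h₁, h₂, h₃, h₄⟩
  have hmeas : MeasurableSet {z : ℝ × ℝ × ℝ | z.1 ∈ Ioo 0 1 ∧
      z.2 ∈ {p : ℝ × ℝ | p.2 ∈ Ioo z.1 1 ∧ p.1 ∈ Ioo z.1 p.2}} := by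
    rw [← hset]
    measurability
  rw [hset, Measure.volume_eq_prod, setLIntegral_prod_of_slices
    (B := fun x₁ => {p : ℝ × ℝ | p.2 ∈ Ioo x₁ 1 ∧ p.1 ∈ Ioo x₁ p.2}) measurableSet_Ioo hmeas hf]
  refine setLIntegral_congr_fun measurableSet_Ioo fun x₁ _ => ?_
  rw [Measure.volume_eq_prod, setLIntegral_prod_of_slices_symm
    (B := fun x₃ => Ioo x₁ x₃) measurableSet_Ioo (by measurability) (by fun_prop)]

theorem lintegral_Ioo_sub_rpow_mul_sub_rpow_mul_rpow {a b e c d : ℝ} (ha : -1 < a) (hb : -1 < b)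
    (hcd : c < d) :
    ∫⁻ x in Ioo c d, ENNReal.ofReal ((x - c) ^ a * (d - x) ^ b * (d - c) ^ e)
      = ENNReal.ofReal ((d - c) ^ (a + b + 1 + e)) * ENNReal.ofReal (beta (a + 1) (b + 1)) := by
  have hk : 0 < d - c := sub_pos.2 hcd
  rw [setLIntegral_congr_fun measurableSet_Ioo fun x hx => ENNReal.ofReal_mul
      (mul_nonneg (rpow_nonneg (sub_nonneg.2 hx.1.le) _) (rpow_nonneg (sub_nonneg.2 hx.2.le) _)),
    lintegral_mul_const' _ _ ENNReal.ofReal_ne_top, lintegral_Ioo_sub_rpow_mul_sub_rpow ha hb hcd,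
    ← ENNReal.ofReal_mul' (rpow_nonneg hk.le _), ← ENNReal.ofReal_mul (rpow_nonneg hk.le _),
    rpow_add hk (a + b + 1)]
  ring_nf

theorem lintegral_ordered_triple_rpow {a b e : ℝ} (ha : -1 < a) (hb : -1 < b)
    (he : 0 < a + b + e + 2) :
    ∫⁻ x in {y : ℝ × ℝ × ℝ | 0 < y.1 ∧ y.1 < y.2.1 ∧ y.2.1 < y.2.2 ∧ y.2.2 < 1},
        ENNReal.ofReal ((x.2.1 - x.1) ^ a * (x.2.2 - x.2.1) ^ b * (x.2.2 - x.1) ^ e)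
      = ENNReal.ofReal (beta (a + 1) (b + 1) / ((a + b + e + 2) * (a + b + e + 3))) := by
  set p := a + b + 1 + e with hp
  rw [setLIntegral_ordered_triple (by fun_prop)]
  calc ∫⁻ x₁ in Ioo 0 1, ∫⁻ x₃ in Ioo x₁ 1, ∫⁻ x₂ in Ioo x₁ x₃,
          ENNReal.ofReal ((x₂ - x₁) ^ a * (x₃ - x₂) ^ b * (x₃ - x₁) ^ e)
      = ∫⁻ x₁ in Ioo 0 1, ∫⁻ x₃ in Ioo x₁ 1,
          ENNReal.ofReal ((x₃ - x₁) ^ p) * ENNReal.ofReal (beta (a + 1) (b + 1)) :=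
        setLIntegral_congr_fun measurableSet_Ioo fun x₁ _ =>
          setLIntegral_congr_fun measurableSet_Ioo fun x₃ hx₃ =>
            lintegral_Ioo_sub_rpow_mul_sub_rpow_mul_rpow ha hb hx₃.1
    _ = ∫⁻ x₁ in Ioo 0 1, ENNReal.ofReal ((1 - x₁) ^ (p + 1)) *
          ENNReal.ofReal (beta (a + 1) (b + 1) / (p + 1)) := by
        refine setLIntegral_congr_fun measurableSet_Ioo fun x₁ hx₁ => ?_
        rw [lintegral_mul_const' _ _ ENNReal.ofReal_ne_top,
          lintegral_Ioo_sub_rpow_left (by linarith) hx₁.2,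
          ← ENNReal.ofReal_mul (div_nonneg (rpow_nonneg (sub_nonneg.2 hx₁.2.le) _) (by linarith)),
          ← ENNReal.ofReal_mul (rpow_nonneg (sub_nonneg.2 hx₁.2.le) _)]
        ring_nf
    _ = ENNReal.ofReal (beta (a + 1) (b + 1) / ((a + b + e + 2) * (a + b + e + 3))) := by
        rw [lintegral_mul_const' _ _ ENNReal.ofReal_ne_top,
          lintegral_Ioo_sub_rpow_right (by linarith) zero_lt_one, sub_zero, one_rpow,
          ← ENNReal.ofReal_mul (div_nonneg zero_le_one (by linarith)), hp, div_mul_div_comm,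
          one_mul]
        ring_nf

/-- `J₃(λ) = ∫_{0<x₁<x₂<x₃<1} (x₂−x₁)^{4λ}(x₃−x₂)^{4λ}(x₃−x₁)^{2λ} dx
  = [1/((2+10λ)(3+10λ))] Γ(1+4λ)²/Γ(2+8λ)` for `λ > −1/8`. -/
theorem stmt7 (lam : ℝ) (hlam : -(1 / 8 : ℝ) < lam) :
    ∫ x in {y : ℝ × ℝ × ℝ | 0 < y.1 ∧ y.1 < y.2.1 ∧ y.2.1 < y.2.2 ∧ y.2.2 < 1},
        (x.2.1 - x.1) ^ (4 * lam) * (x.2.2 - x.2.1) ^ (4 * lam) *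
          (x.2.2 - x.1) ^ (2 * lam)
      = 1 / ((2 + 10 * lam) * (3 + 10 * lam)) *
          (Real.Gamma (1 + 4 * lam) ^ 2 / Real.Gamma (2 + 8 * lam)) := by
  have hnonneg : ∀ᵐ x ∂volume.restrict
      {y : ℝ × ℝ × ℝ | 0 < y.1 ∧ y.1 < y.2.1 ∧ y.2.1 < y.2.2 ∧ y.2.2 < 1},
      0 ≤ (x.2.1 - x.1) ^ (4 * lam) * (x.2.2 - x.2.1) ^ (4 * lam) * (x.2.2 - x.1) ^ (2 * lam) :=
    ae_restrict_of_forall_mem (by measurability) fun x ⟨_, h₂, h₃, _⟩ =>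
      mul_nonneg (mul_nonneg (rpow_nonneg (by linarith) _) (rpow_nonneg (by linarith) _))
        (rpow_nonneg (by linarith) _)
  have hβ := beta_pos (α := 4 * lam + 1) (β := 4 * lam + 1) (by linarith) (by linarith)
  rw [integral_eq_lintegral_of_nonneg_ae hnonneg (by fun_prop),
    lintegral_ordered_triple_rpow (by linarith) (by linarith) (by linarith),
    ENNReal.toReal_ofReal (div_nonneg hβ.le (by nlinarith)), beta, add_comm (4 * lam) 1,
    show 1 + 4 * lam + (1 + 4 * lam) = 2 + 8 * lam by ring]
  ring_nf
end

section
/- For integer λ ≥ 0, the Selberg-type integral S₃(λ) := ∫_{[0,1]³} |y₁−y₂|^{2λ}|y₁−y₃|^{2λ}|y₂−y₃|^{2λ} dy equals (−1)^λ ∑_{I₁₂,I₁₃,I₂₃=−λ}^{λ} (−1)^{I₁₂+I₁₃+I₂₃} C(2λ, λ+I₁₂) C(2λ, λ+I₁₃) C(2λ, λ+I₂₃) · [1/((1+2λ+I₁₂+I₁₃)(1+2λ−I₁₂+I₂₃)(1+2λ−I₁₃−I₂₃))]. -/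
/-!
Since the exponents are even, the absolute values can be dropped, and writing the binomial
expansion of `(yₖ - yₗ)^(2λ)` with index `λ + Iₖₗ` turns the integrand into a finite sum of
monomials `y₁^(2λ+I₁₂+I₁₃) y₂^(2λ-I₁₂+I₂₃) y₃^(2λ-I₁₃-I₂₃)`. A monomial `y₁^a y₂^b y₃^c`
integrates over the unit cube to `1/((a+1)(b+1)(c+1))`, and the signs `(-1)^(λ + Iₖₗ)` of the
three expansions multiply to `(-1)^λ (-1)^(I₁₂+I₁₃+I₂₃)`.
-/

open MeasureTheory Finset

theorem sub_pow_two_mul_eq_sum_Icc {R : Type*} [Field R] (x y : R) (n : ℕ) :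
    (x - y) ^ (2 * n) = ∑ I ∈ Icc (-(n : ℤ)) n,
      (-1 : R) ^ ((n : ℤ) + I) * ((2 * n).choose ((n : ℤ) + I).toNat : R) *
        (x ^ ((n : ℤ) + I).toNat * y ^ ((n : ℤ) - I).toNat) := by
  rw [sub_pow, Int.Icc_eq_finset_map, sum_map,
    show ((n : ℤ) + 1 - -(n : ℤ)).toNat = 2 * n + 1 by omega]
  refine sum_congr rfl fun k hk => ?_
  have hk : k ≤ 2 * n := Nat.lt_succ_iff.mp (mem_range.mp hk)
  simp only [Function.Embedding.trans_apply, Nat.castEmbedding_apply, addLeftEmbedding_apply]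
  rw [show (n : ℤ) + (-n + k) = (k : ℕ) by ring,
    show ((n : ℤ) - (-n + k)).toNat = 2 * n - k by omega,
    Int.toNat_natCast, zpow_natCast, pow_add, pow_mul, neg_one_sq, one_pow]
  ring

theorem neg_one_zpow_mul_neg_one_zpow_mul_neg_one_zpow {R : Type*} [DivisionRing R] (n : ℕ)
    (a b c : ℤ) :
    (-1 : R) ^ ((n : ℤ) + a) * (-1 : R) ^ ((n : ℤ) + b) * (-1 : R) ^ ((n : ℤ) + c)
      = (-1 : R) ^ n * (-1 : R) ^ (a + b + c) := by
  have h : (-1 : R) ≠ 0 := neg_ne_zero.mpr one_ne_zero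
  rw [← zpow_add₀ h, ← zpow_add₀ h, ← zpow_natCast, ← zpow_add₀ h,
    show (n : ℤ) + a + (n + b) + (n + c) = n + (a + b + c) + 2 * n by ring, zpow_add₀ h,
    (even_two_mul _).neg_one_zpow, mul_one]

theorem abs_sub_pow_mul_abs_sub_pow_mul_abs_sub_pow (y₁ y₂ y₃ : ℝ) (n : ℕ) :
    |y₁ - y₂| ^ (2 * n) * |y₁ - y₃| ^ (2 * n) * |y₂ - y₃| ^ (2 * n)
      = ∑ I₁₂ ∈ Icc (-(n : ℤ)) n, ∑ I₁₃ ∈ Icc (-(n : ℤ)) n, ∑ I₂₃ ∈ Icc (-(n : ℤ)) n,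
          (-1 : ℝ) ^ n * (-1 : ℝ) ^ (I₁₂ + I₁₃ + I₂₃) * ((2 * n).choose ((n : ℤ) + I₁₂).toNat : ℝ) *
              ((2 * n).choose ((n : ℤ) + I₁₃).toNat : ℝ) *
              ((2 * n).choose ((n : ℤ) + I₂₃).toNat : ℝ) *
              (y₁ ^ (((n : ℤ) + I₁₂).toNat + ((n : ℤ) + I₁₃).toNat) *
                y₂ ^ (((n : ℤ) - I₁₂).toNat + ((n : ℤ) + I₂₃).toNat) *
                y₃ ^ (((n : ℤ) - I₁₃).toNat + ((n : ℤ) - I₂₃).toNat)) := by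
  simp_rw [(even_two_mul n).pow_abs, sub_pow_two_mul_eq_sum_Icc]
  rw [sum_mul_sum]
  simp_rw [sum_mul, mul_sum]
  refine sum_congr rfl fun I₁₂ _ => sum_congr rfl fun I₁₃ _ => sum_congr rfl fun I₂₃ _ => ?_
  rw [← neg_one_zpow_mul_neg_one_zpow_mul_neg_one_zpow]
  ring

theorem natCast_toNat_of_mem_Icc {R : Type*} [AddGroupWithOne R] {n : ℕ} {I : ℤ}
    (hI : I ∈ Icc (-(n : ℤ)) n) :
    (((n : ℤ) + I).toNat : R) = n + I ∧ (((n : ℤ) - I).toNat : R) = n - I := by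
  rw [mem_Icc] at hI
  constructor <;>
  · rw [← Int.cast_natCast, Int.toNat_of_nonneg (by omega)]
    push_cast; rfl

theorem integral_Icc_zero_one_pow (n : ℕ) : ∫ x in Set.Icc (0 : ℝ) 1, x ^ n = 1 / (n + 1) := by
  rw [integral_Icc_eq_integral_Ioc, ← intervalIntegral.integral_of_le zero_le_one]
  simp [integral_pow]

theorem integral_unitCube_monomial (a b c : ℕ) :
    ∫ y in Set.Icc (0 : ℝ) 1 ×ˢ (Set.Icc (0 : ℝ) 1 ×ˢ Set.Icc (0 : ℝ) 1),
        y.1 ^ a * y.2.1 ^ b * y.2.2 ^ c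
      = 1 / (((a : ℝ) + 1) * ((b : ℝ) + 1) * ((c : ℝ) + 1)) := by
  simp_rw [mul_assoc]
  rw [Measure.volume_eq_prod, setIntegral_prod_mul (fun x : ℝ => x ^ a)
      (fun p : ℝ × ℝ => p.1 ^ b * p.2 ^ c), Measure.volume_eq_prod,
    setIntegral_prod_mul (fun x : ℝ => x ^ b) (fun x : ℝ => x ^ c),
    integral_Icc_zero_one_pow, integral_Icc_zero_one_pow, integral_Icc_zero_one_pow]
  field_simp

theorem integral_finsetSum₃ {α ι E : Type*} [MeasurableSpace α] [NormedAddCommGroup E]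
    [NormedSpace ℝ E] {μ : Measure α} (s : Finset ι) {f : ι → ι → ι → α → E}
    (hf : ∀ i j k, Integrable (f i j k) μ) :
    ∫ x, ∑ i ∈ s, ∑ j ∈ s, ∑ k ∈ s, f i j k x ∂μ
      = ∑ i ∈ s, ∑ j ∈ s, ∑ k ∈ s, ∫ x, f i j k x ∂μ := by
  rw [integral_finsetSum _ fun i _ => integrable_finsetSum _ fun j _ =>
    integrable_finsetSum _ fun k _ => hf i j k]
  refine sum_congr rfl fun i _ => ?_
  rw [integral_finsetSum _ fun j _ => integrable_finsetSum _ fun k _ => hf i j k]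
  exact sum_congr rfl fun j _ => integral_finsetSum _ fun k _ => hf i j k

/-- Binomial-sum representation of `S₃(λ)` for integer `λ`. -/
theorem stmt11 (lam : ℕ) :
    ∫ y in (Set.Icc (0 : ℝ) 1) ×ˢ ((Set.Icc (0 : ℝ) 1) ×ˢ (Set.Icc (0 : ℝ) 1)),
        |y.1 - y.2.1| ^ (2 * lam) * |y.1 - y.2.2| ^ (2 * lam) *
          |y.2.1 - y.2.2| ^ (2 * lam)
      = (-1 : ℝ) ^ lam *
        ∑ I12 ∈ Finset.Icc (-(lam : ℤ)) lam,
          ∑ I13 ∈ Finset.Icc (-(lam : ℤ)) lam,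
            ∑ I23 ∈ Finset.Icc (-(lam : ℤ)) lam,
              (-1 : ℝ) ^ (I12 + I13 + I23) *
                ((2 * lam).choose ((lam : ℤ) + I12).toNat : ℝ) *
                ((2 * lam).choose ((lam : ℤ) + I13).toNat : ℝ) *
                ((2 * lam).choose ((lam : ℤ) + I23).toNat : ℝ) *
                (1 / ((1 + 2 * (lam : ℝ) + (I12 : ℝ) + (I13 : ℝ)) *
                  (1 + 2 * (lam : ℝ) - (I12 : ℝ) + (I23 : ℝ)) *
                  (1 + 2 * (lam : ℝ) - (I13 : ℝ) - (I23 : ℝ)))) := by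
  have hcube : IsCompact (Set.Icc (0 : ℝ) 1 ×ˢ (Set.Icc (0 : ℝ) 1 ×ˢ Set.Icc (0 : ℝ) 1)) :=
    isCompact_Icc.prod (isCompact_Icc.prod isCompact_Icc)
  simp_rw [abs_sub_pow_mul_abs_sub_pow_mul_abs_sub_pow]
  rw [integral_finsetSum₃ _ fun _ _ _ =>
    (by fun_prop : Continuous _).continuousOn.integrableOn_compact hcube]
  simp_rw [mul_sum]
  refine sum_congr rfl fun I₁₂ h₁₂ => sum_congr rfl fun I₁₃ h₁₃ =>
    sum_congr rfl fun I₂₃ h₂₃ => ?_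
  rw [integral_const_mul, integral_unitCube_monomial]
  obtain ⟨hp₁₂, hm₁₂⟩ := natCast_toNat_of_mem_Icc (R := ℝ) h₁₂
  obtain ⟨hp₁₃, hm₁₃⟩ := natCast_toNat_of_mem_Icc (R := ℝ) h₁₃
  obtain ⟨hp₂₃, hm₂₃⟩ := natCast_toNat_of_mem_Icc (R := ℝ) h₂₃
  push_cast [hp₁₂, hm₁₂, hp₁₃, hm₁₃, hp₂₃, hm₂₃]
  ring
end
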